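/- arXiv:2202.07960 — 4 statements merged into one kernel-verified Lean document; each statement's English description precedes it below -/
import Mathlib

section
/- Let μ > 0 and let A be a real d×d matrix such that A + Aᵀ − 2μ·I is positive semidefinite, and let b, θ* ∈ ℝ^d satisfy A·θ* = b and ‖θ*‖ ≤ M for some M ≥ 0. On a probability space, let (F_k)_{k≥0} be a filtration, (α_k)_{k≥0} positive reals, (ε_k)_{k≥0} and (c_k)_{k≥0} nonnegative reals, and let (θ_k)_{k≥0} and (g_k)_{k≥0} be sequences of square-integrable ℝ^d-valued random vectors such that: θ_k is F_k-measurable; ‖θ₀‖ ≤ M almost surely; θ_{k+1} = Π_M(θ_k − α_k·g_k) almost surely; and almost surely for every k, ‖E[g_k | F_k] − (A·θ_k − b)‖ ≤ (1 + ‖θ_k‖)·ε_k and E[‖g_k‖² | F_k] ≤ c_k·(1 + ‖θ_k‖²). Then for every k ≥ 0: E[‖θ_k − θ*‖²] ≤ 4M²·exp(−μ·Σ_{i=0}^{k−1} α_i) + 2·(1 + M²)·Σ_{i=0}^{k−1} α_i·(c_i·α_i + μ⁻¹·ε_i²)·exp(−μ·Σ_{j=i+1}^{k−1} α_j). -/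
/-!
Since `θ*` lies in the ball and the projection onto the ball is nonexpansive towards its points,
`‖θₖ₊₁ - θ*‖² ≤ ‖θₖ - θ* - αₖ gₖ‖²`. In the expectation of the expanded square the cross term
may be computed with `E[gₖ | Fₖ]` in place of `gₖ`, since `θₖ - θ*` is bounded and
`Fₖ`-measurable. Strong monotonicity of `A` and Young's inequality absorb the bias, and the
conditional second moment bounds the quadratic term, so that
`Eₖ₊₁ ≤ exp (-μ αₖ) Eₖ + 2 (1 + M²) αₖ (cₖ αₖ + μ⁻¹ εₖ²)` with `Eₖ = E‖θₖ - θ*‖²`.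
Unrolling this recursion from `E₀ ≤ 4 M²` gives the bound.
-/

open MeasureTheory ProbabilityTheory Matrix

noncomputable section

/-- Metric projection onto the closed Euclidean ball of radius `M` centered at `0`. -/
def projBall {d : ℕ} (M : ℝ) (x : EuclideanSpace ℝ (Fin d)) : EuclideanSpace ℝ (Fin d) :=
  if ‖x‖ ≤ M then x else (M / ‖x‖) • x

/-- Matrix–vector multiplication, viewed as a map on Euclidean space. -/
def mulVecE {d : ℕ} (A : Matrix (Fin d) (Fin d) ℝ) (x : EuclideanSpace ℝ (Fin d)) :
    EuclideanSpace ℝ (Fin d) :=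
  WithLp.toLp 2 (A.mulVec x)

open scoped RealInnerProductSpace

section Deterministic

variable {d : ℕ}

lemma norm_projBall_le {M : ℝ} (hM : 0 ≤ M) (x : EuclideanSpace ℝ (Fin d)) :
    ‖projBall M x‖ ≤ M := by
  unfold projBall
  split_ifs with h
  · exact h
  · have hx : 0 < ‖x‖ := hM.trans_lt (not_le.1 h)
    rw [norm_smul, Real.norm_of_nonneg (by positivity), div_mul_cancel₀ _ hx.ne']

lemma norm_projBall_sub_le {M : ℝ} (x : EuclideanSpace ℝ (Fin d))
    {y : EuclideanSpace ℝ (Fin d)} (hy : ‖y‖ ≤ M) : ‖projBall M x - y‖ ≤ ‖x - y‖ := by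
  unfold projBall
  split_ifs with h
  · exact le_rfl
  have hx : 0 < ‖x‖ := (norm_nonneg y).trans_lt (hy.trans_lt (not_le.1 h))
  set t := M / ‖x‖
  have ht0 : 0 ≤ t := div_nonneg ((norm_nonneg y).trans hy) hx.le
  have ht1 : t ≤ 1 := (div_le_one hx).2 (not_le.1 h).le
  have hxy : ⟪x, y⟫ ≤ t * ‖x‖ ^ 2 := by
    have htx : t * ‖x‖ = M := div_mul_cancel₀ _ hx.ne'
    nlinarith [real_inner_le_norm x y, mul_le_mul_of_nonneg_left hy hx.le]
  -- `‖t • x - y‖² - ‖x - y‖² = (1 - t) (2 ⟪x, y⟫ - (1 + t) ‖x‖²)`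
  rw [← pow_le_pow_iff_left₀ (norm_nonneg _) (norm_nonneg _) two_ne_zero, norm_sub_sq_real,
    norm_sub_sq_real, real_inner_smul_left, norm_smul, Real.norm_of_nonneg ht0]
  nlinarith [mul_nonneg (sub_nonneg.2 ht1) (sq_nonneg ‖x‖)]

lemma mulVecE_sub (A : Matrix (Fin d) (Fin d) ℝ) (x y : EuclideanSpace ℝ (Fin d)) :
    mulVecE A (x - y) = mulVecE A x - mulVecE A y := by
  simp [mulVecE, mulVec_sub]

lemma mul_norm_sq_le_inner_mulVecE {μ : ℝ} {A : Matrix (Fin d) (Fin d) ℝ}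
    (hA : (A + Aᵀ - (2 * μ) • (1 : Matrix (Fin d) (Fin d) ℝ)).PosSemidef)
    (x : EuclideanSpace ℝ (Fin d)) : μ * ‖x‖ ^ 2 ≤ ⟪x, mulVecE A x⟫ := by
  have h := hA.dotProduct_mulVec_nonneg x.ofLp
  have hinner : ⟪x, mulVecE A x⟫ = x.ofLp ⬝ᵥ A *ᵥ x.ofLp := by
    rw [EuclideanSpace.inner_eq_star_dotProduct, star_trivial, dotProduct_comm]
    rfl
  have hnorm : ‖x‖ ^ 2 = x.ofLp ⬝ᵥ x.ofLp := by
    rw [← real_inner_self_eq_norm_sq, EuclideanSpace.inner_eq_star_dotProduct, star_trivial]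
  have htranspose : x.ofLp ⬝ᵥ Aᵀ *ᵥ x.ofLp = x.ofLp ⬝ᵥ A *ᵥ x.ofLp := by
    rw [dotProduct_mulVec, vecMul_transpose, dotProduct_comm]
  simp only [star_trivial, sub_mulVec, add_mulVec, smul_mulVec, one_mulVec, dotProduct_sub,
    dotProduct_add, dotProduct_smul, smul_eq_mul, htranspose] at h
  rw [hinner, hnorm]
  linarith

end Deterministic

lemma mul_norm_sq_sub_inv_mul_sq_le_two_mul_inner {E : Type*} [NormedAddCommGroup E]
    [InnerProductSpace ℝ E] {μ δ : ℝ} (hμ : 0 < μ) {e h v : E}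
    (hv : μ * ‖e‖ ^ 2 ≤ ⟪e, v⟫) (hhv : ‖h - v‖ ≤ δ) :
    μ * ‖e‖ ^ 2 - μ⁻¹ * δ ^ 2 ≤ 2 * ⟪e, h⟫ := by
  have hsplit : ⟪e, h⟫ = ⟪e, v⟫ + ⟪e, h - v⟫ := by rw [← inner_add_right, add_sub_cancel]
  have hbias : -(‖e‖ * δ) ≤ ⟪e, h - v⟫ :=
    neg_le_of_abs_le ((abs_real_inner_le_norm _ _).trans (by gcongr))
  have hyoung : 2 * (‖e‖ * δ) ≤ μ * ‖e‖ ^ 2 + μ⁻¹ * δ ^ 2 := by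
    have := mul_nonneg (inv_nonneg.2 hμ.le) (sq_nonneg (μ * ‖e‖ - δ))
    have hexpand : μ⁻¹ * (μ * ‖e‖ - δ) ^ 2 = μ * ‖e‖ ^ 2 - 2 * (‖e‖ * δ) + μ⁻¹ * δ ^ 2 := by
      field_simp
      ring
    linarith
  linarith

lemma two_mul_inner_ge_of_norm_sub_le {d : ℕ} {μ M ε : ℝ} (hμ : 0 < μ)
    {A : Matrix (Fin d) (Fin d) ℝ}
    (hA : (A + Aᵀ - (2 * μ) • (1 : Matrix (Fin d) (Fin d) ℝ)).PosSemidef)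
    {b θstar θ h : EuclideanSpace ℝ (Fin d)} (hθstar : mulVecE A θstar = b)
    (hθ : ‖θ‖ ≤ M) (hbias : ‖h - (mulVecE A θ - b)‖ ≤ (1 + ‖θ‖) * ε) :
    μ * ‖θ - θstar‖ ^ 2 - 2 * μ⁻¹ * (1 + M ^ 2) * ε ^ 2 ≤ 2 * ⟪θ - θstar, h⟫ := by
  rw [← hθstar, ← mulVecE_sub] at hbias
  have hyoung := mul_norm_sq_sub_inv_mul_sq_le_two_mul_inner hμ
    (mul_norm_sq_le_inner_mulVecE hA (θ - θstar)) hbias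
  have hθsq : ‖θ‖ ^ 2 ≤ M ^ 2 := pow_le_pow_left₀ (norm_nonneg _) hθ 2
  have hδ : ((1 + ‖θ‖) * ε) ^ 2 ≤ 2 * (1 + M ^ 2) * ε ^ 2 := by
    rw [mul_pow]
    gcongr
    nlinarith [sq_nonneg (1 - ‖θ‖)]
  have := mul_le_mul_of_nonneg_left hδ (inv_nonneg.2 hμ.le)
  linarith

lemma le_exp_decay_of_le_exp_mul_add {x α β : ℕ → ℝ} {μ C : ℝ} (h0 : x 0 ≤ C)
    (hstep : ∀ k, x (k + 1) ≤ Real.exp (-μ * α k) * x k + β k) (k : ℕ) :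
    x k ≤ C * Real.exp (-μ * ∑ i ∈ Finset.range k, α i) +
      ∑ i ∈ Finset.range k, β i * Real.exp (-μ * ∑ j ∈ Finset.Ico (i + 1) k, α j) := by
  induction k with
  | zero => simpa using h0
  | succ k ih =>
    have hfirst : Real.exp (-μ * ∑ i ∈ Finset.range (k + 1), α i) =
        Real.exp (-μ * ∑ i ∈ Finset.range k, α i) * Real.exp (-μ * α k) := by
      rw [Finset.sum_range_succ, mul_add, Real.exp_add]
    have hsecond : ∑ i ∈ Finset.range (k + 1),
          β i * Real.exp (-μ * ∑ j ∈ Finset.Ico (i + 1) (k + 1), α j) =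
        (∑ i ∈ Finset.range k, β i * Real.exp (-μ * ∑ j ∈ Finset.Ico (i + 1) k, α j)) *
          Real.exp (-μ * α k) + β k := by
      rw [Finset.sum_range_succ, Finset.Ico_self, Finset.sum_empty, mul_zero, Real.exp_zero,
        mul_one, Finset.sum_mul]
      congr 1
      refine Finset.sum_congr rfl fun i hi => ?_
      rw [Finset.sum_Ico_succ_top (Finset.mem_range.1 hi), mul_add, Real.exp_add, mul_assoc]
    rw [hfirst, hsecond]
    calc x (k + 1) ≤ Real.exp (-μ * α k) * x k + β k := hstep k
      _ ≤ Real.exp (-μ * α k) * (C * Real.exp (-μ * ∑ i ∈ Finset.range k, α i) +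
            ∑ i ∈ Finset.range k, β i * Real.exp (-μ * ∑ j ∈ Finset.Ico (i + 1) k, α j))
            + β k := by gcongr
      _ = _ := by ring

lemma integral_inner_condExp {Ω E : Type*} [NormedAddCommGroup E] [InnerProductSpace ℝ E]
    [CompleteSpace E] {m m0 : MeasurableSpace Ω} {P : Measure Ω} [IsFiniteMeasure P]
    (hm : m ≤ m0) {e g : Ω → E} {C : ℝ} (he : StronglyMeasurable[m] e)
    (heC : ∀ᵐ ω ∂P, ‖e ω‖ ≤ C) (hg : Integrable g P) :
    ∫ ω, ⟪e ω, g ω⟫ ∂P = ∫ ω, ⟪e ω, (P[g|m]) ω⟫ ∂P := by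
  rw [← integral_condExp hm]
  exact integral_congr_ae (condExp_stronglyMeasurable_bilin_of_bound (innerSL ℝ) hm he hg C heC)

lemma integral_norm_sq_le_of_condExp_le {Ω E F : Type*} [NormedAddCommGroup E]
    [NormedAddCommGroup F] {m m0 : MeasurableSpace Ω} {P : Measure Ω} [IsProbabilityMeasure P]
    (hm : m ≤ m0) {θ : Ω → F} {g : Ω → E} {c M : ℝ} (hc : 0 ≤ c)
    (hθM : ∀ᵐ ω ∂P, ‖θ ω‖ ≤ M)
    (hmom : ∀ᵐ ω ∂P, (P[fun ω' => ‖g ω'‖ ^ 2 | m]) ω ≤ c * (1 + ‖θ ω‖ ^ 2)) :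
    ∫ ω, ‖g ω‖ ^ 2 ∂P ≤ c * (1 + M ^ 2) := by
  rw [← integral_condExp hm]
  calc ∫ ω, (P[fun ω' => ‖g ω'‖ ^ 2 | m]) ω ∂P ≤ ∫ _ω, c * (1 + M ^ 2) ∂P := by
        refine integral_mono_ae integrable_condExp (integrable_const _) ?_
        filter_upwards [hθM, hmom] with ω hθω hmomω
        have := pow_le_pow_left₀ (norm_nonneg _) hθω 2
        exact hmomω.trans (by gcongr)
    _ = c * (1 + M ^ 2) := by simp

lemma ae_norm_sub_le_two_mul {Ω E : Type*} [SeminormedAddCommGroup E] {m0 : MeasurableSpace Ω}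
    {P : Measure Ω} {M : ℝ} {θ : Ω → E} {θstar : E} (hθM : ∀ᵐ ω ∂P, ‖θ ω‖ ≤ M)
    (hθstarM : ‖θstar‖ ≤ M) : ∀ᵐ ω ∂P, ‖θ ω - θstar‖ ≤ 2 * M := by
  filter_upwards [hθM] with ω hω
  linarith [norm_sub_le (θ ω) θstar]

section OneStep

variable {Ω : Type*} {m m0 : MeasurableSpace Ω} {P : Measure Ω}
  {d : ℕ} {μ M α ε c : ℝ} {A : Matrix (Fin d) (Fin d) ℝ} {b θstar : EuclideanSpace ℝ (Fin d)}
  {θ θ' g : Ω → EuclideanSpace ℝ (Fin d)}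

lemma integral_norm_projBall_sub_sq_le (hθstarM : ‖θstar‖ ≤ M)
    (he : Integrable (fun ω => ‖θ ω - θstar‖ ^ 2) P)
    (hinner : Integrable (fun ω => ⟪θ ω - θstar, g ω⟫) P) (hg : MemLp g 2 P)
    (hθ' : ∀ᵐ ω ∂P, θ' ω = projBall M (θ ω - α • g ω)) :
    ∫ ω, ‖θ' ω - θstar‖ ^ 2 ∂P ≤ ∫ ω, ‖θ ω - θstar‖ ^ 2 ∂P
      - 2 * α * ∫ ω, ⟪θ ω - θstar, g ω⟫ ∂P + α ^ 2 * ∫ ω, ‖g ω‖ ^ 2 ∂P := by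
  have hexpand : ∀ ω, ‖θ ω - α • g ω - θstar‖ ^ 2 = ‖θ ω - θstar‖ ^ 2
      - 2 * α * ⟪θ ω - θstar, g ω⟫ + α ^ 2 * ‖g ω‖ ^ 2 := fun ω => by
    rw [sub_right_comm, norm_sub_sq_real, real_inner_smul_right, norm_smul, mul_pow,
      Real.norm_eq_abs, sq_abs]
    ring
  have hsub : Integrable (fun ω => ‖θ ω - θstar‖ ^ 2 - 2 * α * ⟪θ ω - θstar, g ω⟫) P :=
    he.sub (hinner.const_mul _)
  have hsq := hg.norm.integrable_sq.const_mul (α ^ 2)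
  calc ∫ ω, ‖θ' ω - θstar‖ ^ 2 ∂P ≤ ∫ ω, (‖θ ω - θstar‖ ^ 2
        - 2 * α * ⟪θ ω - θstar, g ω⟫ + α ^ 2 * ‖g ω‖ ^ 2) ∂P := by
        refine integral_mono_of_nonneg (ae_of_all _ fun ω => sq_nonneg _) (hsub.add hsq) ?_
        filter_upwards [hθ'] with ω hω
        rw [hω, ← hexpand]
        exact pow_le_pow_left₀ (norm_nonneg _) (norm_projBall_sub_le _ hθstarM) 2
    _ = _ := by
        rw [integral_add hsub hsq, integral_sub he (hinner.const_mul _), integral_const_mul,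
          integral_const_mul]

lemma two_mul_integral_inner_ge [IsProbabilityMeasure P] (hm : m ≤ m0) (hμ : 0 < μ)
    (hA : (A + Aᵀ - (2 * μ) • (1 : Matrix (Fin d) (Fin d) ℝ)).PosSemidef)
    (hθstar : mulVecE A θstar = b) (hθstarM : ‖θstar‖ ≤ M) (hθ : StronglyMeasurable[m] θ)
    (hθM : ∀ᵐ ω ∂P, ‖θ ω‖ ≤ M) (he : Integrable (fun ω => ‖θ ω - θstar‖ ^ 2) P)
    (hg : Integrable g P)
    (hbias : ∀ᵐ ω ∂P, ‖(P[g | m]) ω - (mulVecE A (θ ω) - b)‖ ≤ (1 + ‖θ ω‖) * ε) :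
    μ * ∫ ω, ‖θ ω - θstar‖ ^ 2 ∂P - 2 * μ⁻¹ * (1 + M ^ 2) * ε ^ 2 ≤
      2 * ∫ ω, ⟪θ ω - θstar, g ω⟫ ∂P := by
  have heM := ae_norm_sub_le_two_mul hθM hθstarM
  have he_meas : StronglyMeasurable[m] fun ω => θ ω - θstar := hθ.sub stronglyMeasurable_const
  have hinner : Integrable (fun ω => ⟪θ ω - θstar, (P[g | m]) ω⟫) P :=
    (innerSL ℝ).integrable_of_bilin_of_bdd_left (2 * M) (he_meas.mono hm).aestronglyMeasurable
      heM integrable_condExp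
  rw [integral_inner_condExp hm he_meas heM hg]
  calc μ * ∫ ω, ‖θ ω - θstar‖ ^ 2 ∂P - 2 * μ⁻¹ * (1 + M ^ 2) * ε ^ 2
      = ∫ ω, (μ * ‖θ ω - θstar‖ ^ 2 - 2 * μ⁻¹ * (1 + M ^ 2) * ε ^ 2) ∂P := by
        rw [integral_sub (he.const_mul μ) (integrable_const _), integral_const_mul,
          integral_const, probReal_univ, one_smul]
    _ ≤ ∫ ω, 2 * ⟪θ ω - θstar, (P[g | m]) ω⟫ ∂P := by
        refine integral_mono_ae ((he.const_mul μ).sub (integrable_const _))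
          (hinner.const_mul 2) ?_
        filter_upwards [hθM, hbias] with ω hθω hbiasω
        exact two_mul_inner_ge_of_norm_sub_le hμ hA hθstar hθω hbiasω
    _ = 2 * ∫ ω, ⟪θ ω - θstar, (P[g | m]) ω⟫ ∂P := integral_const_mul _ _

lemma integral_norm_sub_sq_step_le [IsProbabilityMeasure P] (hm : m ≤ m0) (hμ : 0 < μ)
    (hA : (A + Aᵀ - (2 * μ) • (1 : Matrix (Fin d) (Fin d) ℝ)).PosSemidef)
    (hθstar : mulVecE A θstar = b) (hθstarM : ‖θstar‖ ≤ M) (hα : 0 < α) (hc : 0 ≤ c)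
    (hθ : StronglyMeasurable[m] θ) (hθM : ∀ᵐ ω ∂P, ‖θ ω‖ ≤ M) (hg : MemLp g 2 P)
    (hθ' : ∀ᵐ ω ∂P, θ' ω = projBall M (θ ω - α • g ω))
    (hbias : ∀ᵐ ω ∂P, ‖(P[g | m]) ω - (mulVecE A (θ ω) - b)‖ ≤ (1 + ‖θ ω‖) * ε)
    (hmom : ∀ᵐ ω ∂P, (P[fun ω' => ‖g ω'‖ ^ 2 | m]) ω ≤ c * (1 + ‖θ ω‖ ^ 2)) :
    ∫ ω, ‖θ' ω - θstar‖ ^ 2 ∂P ≤ Real.exp (-μ * α) * ∫ ω, ‖θ ω - θstar‖ ^ 2 ∂P +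
      2 * (1 + M ^ 2) * (α * (c * α + μ⁻¹ * ε ^ 2)) := by
  have heM := ae_norm_sub_le_two_mul hθM hθstarM
  have he_meas : AEStronglyMeasurable (fun ω => θ ω - θstar) P :=
    ((hθ.sub stronglyMeasurable_const).mono hm).aestronglyMeasurable
  have he : Integrable (fun ω => ‖θ ω - θstar‖ ^ 2) P := by
    refine Integrable.of_bound (he_meas.norm.pow 2) ((2 * M) ^ 2) ?_
    filter_upwards [heM] with ω hω
    rw [Real.norm_of_nonneg (sq_nonneg _)]
    exact pow_le_pow_left₀ (norm_nonneg _) hω 2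
  have hinner : Integrable (fun ω => ⟪θ ω - θstar, g ω⟫) P :=
    (innerSL ℝ).integrable_of_bilin_of_bdd_left (2 * M) he_meas heM (hg.integrable one_le_two)
  have hproj := integral_norm_projBall_sub_sq_le hθstarM he hinner hg hθ'
  have hdrift := two_mul_integral_inner_ge hm hμ hA hθstar hθstarM hθ hθM he
    (hg.integrable one_le_two) hbias
  have hmoment := integral_norm_sq_le_of_condExp_le hm hc hθM hmom
  have hexp : 1 - μ * α ≤ Real.exp (-μ * α) := by linarith [Real.add_one_le_exp (-μ * α)]
  have he0 : 0 ≤ ∫ ω, ‖θ ω - θstar‖ ^ 2 ∂P := integral_nonneg fun ω => sq_nonneg _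
  calc ∫ ω, ‖θ' ω - θstar‖ ^ 2 ∂P
      ≤ (1 - μ * α) * ∫ ω, ‖θ ω - θstar‖ ^ 2 ∂P +
          2 * (1 + M ^ 2) * (α * (c * α + μ⁻¹ * ε ^ 2)) := by
        nlinarith [mul_le_mul_of_nonneg_left hdrift hα.le,
          mul_le_mul_of_nonneg_left hmoment (sq_nonneg α),
          mul_nonneg (mul_nonneg hc (sq_nonneg α)) (by positivity : (0 : ℝ) ≤ 1 + M ^ 2)]
    _ ≤ Real.exp (-μ * α) * ∫ ω, ‖θ ω - θstar‖ ^ 2 ∂P +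
          2 * (1 + M ^ 2) * (α * (c * α + μ⁻¹ * ε ^ 2)) := by gcongr

end OneStep

theorem projected_stochastic_approximation_general
    {Ω : Type*} [m0 : MeasurableSpace Ω] (P : Measure Ω) [IsProbabilityMeasure P]
    (d : ℕ) (μ M : ℝ) (hμ : 0 < μ)
    (A : Matrix (Fin d) (Fin d) ℝ)
    (hA : (A + Aᵀ - (2 * μ) • (1 : Matrix (Fin d) (Fin d) ℝ)).PosSemidef)
    (b θstar : EuclideanSpace ℝ (Fin d))
    (hθstar : mulVecE A θstar = b) (hθstarM : ‖θstar‖ ≤ M)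
    (F : ℕ → MeasurableSpace Ω) (hF : ∀ k, F k ≤ m0)
    (α : ℕ → ℝ) (hα : ∀ k, 0 < α k)
    (ε c : ℕ → ℝ) (hc : ∀ k, 0 ≤ c k)
    (θ g : ℕ → Ω → EuclideanSpace ℝ (Fin d))
    (hθmeas : ∀ k, StronglyMeasurable[F k] (θ k))
    (hgL2 : ∀ k, MemLp (g k) 2 P)
    (hθ0 : ∀ᵐ ω ∂P, ‖θ 0 ω‖ ≤ M)
    (hrec : ∀ k, ∀ᵐ ω ∂P, θ (k + 1) ω = projBall M (θ k ω - α k • g k ω))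
    (hbias : ∀ k, ∀ᵐ ω ∂P,
      ‖(P[g k | F k]) ω - (mulVecE A (θ k ω) - b)‖ ≤ (1 + ‖θ k ω‖) * ε k)
    (hmom : ∀ k, ∀ᵐ ω ∂P,
      (P[fun ω' => ‖g k ω'‖ ^ 2 | F k]) ω ≤ c k * (1 + ‖θ k ω‖ ^ 2)) :
    ∀ k : ℕ,
      (∫ ω, ‖θ k ω - θstar‖ ^ 2 ∂P) ≤
        4 * M ^ 2 * Real.exp (-μ * ∑ i ∈ Finset.range k, α i) +
        2 * (1 + M ^ 2) * ∑ i ∈ Finset.range k,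
          α i * (c i * α i + μ⁻¹ * ε i ^ 2) *
            Real.exp (-μ * ∑ j ∈ Finset.Ico (i + 1) k, α j) := by
  have hθM : ∀ k, ∀ᵐ ω ∂P, ‖θ k ω‖ ≤ M := by
    intro k
    induction k with
    | zero => exact hθ0
    | succ k _ =>
      filter_upwards [hrec k] with ω hω
      rw [hω]
      exact norm_projBall_le ((norm_nonneg _).trans hθstarM) _
  have hinit : ∫ ω, ‖θ 0 ω - θstar‖ ^ 2 ∂P ≤ 4 * M ^ 2 := by
    calc ∫ ω, ‖θ 0 ω - θstar‖ ^ 2 ∂P ≤ ∫ _ω, (2 * M) ^ 2 ∂P := by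
          refine integral_mono_of_nonneg (ae_of_all _ fun _ => sq_nonneg _)
            (integrable_const _) ?_
          filter_upwards [ae_norm_sub_le_two_mul (hθM 0) hθstarM] with ω hω
          exact pow_le_pow_left₀ (norm_nonneg _) hω 2
      _ = 4 * M ^ 2 := by simp only [integral_const, probReal_univ, one_smul]; ring
  intro k
  simpa only [Finset.mul_sum, mul_assoc] using le_exp_decay_of_le_exp_mul_add
    (x := fun k => ∫ ω, ‖θ k ω - θstar‖ ^ 2 ∂P) hinit
    (fun k => integral_norm_sub_sq_step_le (hF k) hμ hA hθstar hθstarM (hα k) (hc k)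
      (hθmeas k) (hθM k) (hgL2 k) (hrec k) (hbias k) (hmom k)) k

/-- Abstract stochastic-approximation convergence theorem for the projected iteration
`θ_{k+1} = Π_M(θ_k − α_k g_k)` with biased estimates `g_k` of `A θ_k − b`, where the
symmetric part of `A` is at least `μ I`:
`E[‖θ_k − θ*‖²] ≤ 4M² e^{−μ Σ_{i<k} α_i} + 2(1+M²) Σ_{i<k} α_i (c_i α_i + μ⁻¹ ε_i²)
e^{−μ Σ_{i<j<k} α_j}`. -/
theorem projected_stochastic_approximation
    {Ω : Type*} [m0 : MeasurableSpace Ω] (P : Measure Ω) [IsProbabilityMeasure P]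
    (d : ℕ) (μ M : ℝ) (hμ : 0 < μ) (hM : 0 ≤ M)
    (A : Matrix (Fin d) (Fin d) ℝ)
    (hA : (A + Aᵀ - (2 * μ) • (1 : Matrix (Fin d) (Fin d) ℝ)).PosSemidef)
    (b θstar : EuclideanSpace ℝ (Fin d))
    (hθstar : mulVecE A θstar = b) (hθstarM : ‖θstar‖ ≤ M)
    (F : ℕ → MeasurableSpace Ω) (hF : ∀ k, F k ≤ m0) (hFmono : Monotone F)
    (α : ℕ → ℝ) (hα : ∀ k, 0 < α k)
    (ε c : ℕ → ℝ) (hε : ∀ k, 0 ≤ ε k) (hc : ∀ k, 0 ≤ c k)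
    (θ g : ℕ → Ω → EuclideanSpace ℝ (Fin d))
    (hθmeas : ∀ k, StronglyMeasurable[F k] (θ k))
    (hθL2 : ∀ k, MemLp (θ k) 2 P) (hgL2 : ∀ k, MemLp (g k) 2 P)
    (hθ0 : ∀ᵐ ω ∂P, ‖θ 0 ω‖ ≤ M)
    (hrec : ∀ k, ∀ᵐ ω ∂P, θ (k + 1) ω = projBall M (θ k ω - α k • g k ω))
    (hbias : ∀ k, ∀ᵐ ω ∂P,
      ‖(P[g k | F k]) ω - (mulVecE A (θ k ω) - b)‖ ≤ (1 + ‖θ k ω‖) * ε k)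
    (hmom : ∀ k, ∀ᵐ ω ∂P,
      (P[fun ω' => ‖g k ω'‖ ^ 2 | F k]) ω ≤ c k * (1 + ‖θ k ω‖ ^ 2)) :
    ∀ k : ℕ,
      (∫ ω, ‖θ k ω - θstar‖ ^ 2 ∂P) ≤
        4 * M ^ 2 * Real.exp (-μ * ∑ i ∈ Finset.range k, α i) +
        2 * (1 + M ^ 2) * ∑ i ∈ Finset.range k,
          α i * (c i * α i + μ⁻¹ * ε i ^ 2) *
            Real.exp (-μ * ∑ j ∈ Finset.Ico (i + 1) k, α j) :=
  projected_stochastic_approximation_general (m0 := m0) P d μ M hμ A hA b θstar hθstar hθstarM F hF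
    α hα ε c hc θ g hθmeas hgL2 hθ0 hrec hbias hmom
end
end

section
/- Let H be a real d×d matrix with symmetric part S = (H + Hᵀ)/2 and antisymmetric part A = (H − Hᵀ)/2. Assume S is positive semidefinite and that there exists c ≥ 0 with AᵀA ⪯ c²·S² and SA − AS ⪯ 2c·S² in the Loewner order. Then for every α > 0 with α·(1 + c)²·tr(S) ≤ 1, one has (I − α·Hᵀ)·(I − α·H) ⪯ I − α·S. -/
/-! Writing `H = S + A`, `Hᵀ = S - A` gives `HᵀH = S² + (SA - AS) + AᵀA`, so the gap
`(I - αS) - (I - αHᵀ)(I - αH) = αS - α²HᵀH` regroups, using `(1 + c)² = 1 + 2c + c²`, as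
`α²(2cS² - (SA - AS)) + α²(c²S² - AᵀA) + α(S - α(1 + c)²S²)`. The first two terms are PSD by
hypothesis, and the last because `S² ⪯ tr(S) S`: every eigenvalue of a PSD matrix is at most
its trace. -/

open Matrix Unitary
open scoped ComplexOrder

namespace Matrix

variable {n 𝕜 : Type*} [Fintype n] [RCLike 𝕜]

theorem PosSemidef.trace_smul_sub_mul_self {S : Matrix n n 𝕜} (hS : S.PosSemidef) :
    (S.trace • S - S * S).PosSemidef := by
  classical
  set ev := hS.1.eigenvalues
  have hdiag : S.trace • S - S * S = conjStarAlgAut 𝕜 _ hS.1.eigenvectorUnitary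
      (diagonal fun i => (((∑ j, ev j) * ev i - ev i ^ 2 : ℝ) : 𝕜)) := by
    have hD : diagonal (fun i => (((∑ j, ev j) * ev i - ev i ^ 2 : ℝ) : 𝕜))
        = (∑ j, (ev j : 𝕜)) • diagonal (RCLike.ofReal ∘ ev)
          - diagonal (RCLike.ofReal ∘ ev) * diagonal (RCLike.ofReal ∘ ev) := by
      ext i j
      by_cases h : i = j <;> simp [h, sq]
    rw [hD, map_sub, map_smul, map_mul, ← hS.1.spectral_theorem, hS.1.trace_eq_sum_eigenvalues]
  rw [hdiag, conjStarAlgAut_apply, isUnit_coe.posSemidef_star_right_conjugate_iff,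
    posSemidef_diagonal_iff]
  intro i
  have hle : ev i ≤ ∑ j, ev j :=
    Finset.single_le_sum (fun j _ => hS.eigenvalues_nonneg j) (Finset.mem_univ i)
  exact RCLike.ofReal_nonneg.mpr (by nlinarith [hS.eigenvalues_nonneg i])

theorem PosSemidef.sub_smul_mul_self {S : Matrix n n 𝕜} (hS : S.PosSemidef) {β : 𝕜}
    (hβ : 0 ≤ β) (hβS : β * S.trace ≤ 1) : (S - β • (S * S)).PosSemidef := by
  have hsplit : S - β • (S * S) = (1 - β * S.trace) • S + β • (S.trace • S - S * S) := by
    module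
  rw [hsplit]
  exact (hS.smul (sub_nonneg.mpr hβS)).add (hS.trace_smul_sub_mul_self.smul hβ)

end Matrix

theorem one_sub_smul_sub_one_sub_smul_mul_one_sub_smul {R M : Type*} [CommRing R] [Ring M]
    [Algebra R M] (S A : M) (α c : R) :
    (1 - α • S) - (1 - α • (S - A)) * (1 - α • (S + A)) =
      α ^ 2 • ((2 * c) • (S * S) - (S * A - A * S)) + α ^ 2 • (c ^ 2 • (S * S) + A * A)
        + α • (S - (α * (1 + c) ^ 2) • (S * S)) := by
  simp only [mul_sub, sub_mul, mul_one, one_mul, mul_add, smul_mul_smul_comm]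
  module

theorem td_iteration_contraction_general
    (d : ℕ) (H S A : Matrix (Fin d) (Fin d) ℝ)
    (hS : S = ((1 : ℝ) / 2) • (H + Hᵀ)) (hA : A = ((1 : ℝ) / 2) • (H - Hᵀ))
    (hSpsd : S.PosSemidef) (c : ℝ)
    (hA2 : ((c ^ 2) • (S * S) - Aᵀ * A).PosSemidef)
    (hSA : ((2 * c) • (S * S) - (S * A - A * S)).PosSemidef)
    (α : ℝ) (hα : 0 < α) (hαtr : α * (1 + c) ^ 2 * S.trace ≤ 1) :
    ((1 - α • S) - (1 - α • Hᵀ) * (1 - α • H)).PosSemidef := by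
  have hH : H = S + A := by rw [hS, hA]; module
  have hHT : Hᵀ = S - A := by rw [hS, hA]; module
  have hAT : Aᵀ = -A := by rw [hA, transpose_smul, transpose_sub, transpose_transpose]; module
  rw [hAT, neg_mul, sub_neg_eq_add] at hA2
  rw [hHT, hH, one_sub_smul_sub_one_sub_smul_mul_one_sub_smul S A α c]
  have hβ : (S - (α * (1 + c) ^ 2) • (S * S)).PosSemidef :=
    hSpsd.sub_smul_mul_self (by positivity) hαtr
  exact ((hSA.smul (sq_nonneg α)).add (hA2.smul (sq_nonneg α))).add (hβ.smul hα.le)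

/-- Contraction estimate for the TD(0) iteration matrix: if `S` and `A` are the symmetric
and antisymmetric parts of `H`, `S` is positive semidefinite, `AᵀA ⪯ c² S²` and
`SA − AS ⪯ 2c S²`, then for every `α > 0` with `α (1+c)² tr(S) ≤ 1` one has
`(I − αHᵀ)(I − αH) ⪯ I − αS`. -/
theorem td_iteration_contraction
    (d : ℕ) (H S A : Matrix (Fin d) (Fin d) ℝ)
    (hS : S = ((1 : ℝ) / 2) • (H + Hᵀ)) (hA : A = ((1 : ℝ) / 2) • (H - Hᵀ))
    (hSpsd : S.PosSemidef) (c : ℝ) (hc : 0 ≤ c)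
    (hA2 : ((c ^ 2) • (S * S) - Aᵀ * A).PosSemidef)
    (hSA : ((2 * c) • (S * S) - (S * A - A * S)).PosSemidef)
    (α : ℝ) (hα : 0 < α) (hαtr : α * (1 + c) ^ 2 * S.trace ≤ 1) :
    ((1 - α • S) - (1 - α • Hᵀ) * (1 - α • H)).PosSemidef :=
  td_iteration_contraction_general d H S A hS hA hSpsd c hA2 hSA α hα hαtr
end

section
/- Let H be a real d×d matrix and α > 0 such that (I − α·Hᵀ)·(I − α·H) ⪯ I in the Loewner order. Then for every natural number k: (I − (I − α·H)^k)ᵀ·(I − (I − α·H)^k) ⪯ α²·k²·Hᵀ·H. -/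
/-!
Put `B = 1 - αH`; the hypothesis says `Bᵀ B ⪯ 1`, hence `(Bⁱ)ᵀ Bⁱ ⪯ 1` for all `i`. Since
`1 - Bᵏ = (∑_{i<k} Bⁱ)(1 - B)` and, by Cauchy–Schwarz in the Loewner order,
`(∑_{i<k} Bⁱ)ᵀ (∑_{i<k} Bⁱ) ⪯ k ∑_{i<k} (Bⁱ)ᵀ Bⁱ ⪯ k² · 1`, conjugating by `1 - B = αH` gives the
bound.
-/

open Matrix Finset

open scoped MatrixOrder

section StarOrderedRing

variable {R : Type*} [Ring R] [PartialOrder R] [StarRing R] [StarOrderedRing R]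

theorem star_pow_mul_pow_le_one {b : R} (hb : star b * b ≤ 1) (n : ℕ) :
    star (b ^ n) * b ^ n ≤ 1 := by
  induction n with
  | zero => simp
  | succ n ih =>
    calc star (b ^ (n + 1)) * b ^ (n + 1) = star (b ^ n) * (star b * b) * b ^ n := by
          rw [pow_succ', star_mul, mul_assoc, mul_assoc, mul_assoc]
      _ ≤ star (b ^ n) * 1 * b ^ n := star_left_conjugate_le_conjugate hb _
      _ ≤ 1 := by rwa [mul_one]

theorem star_sum_mul_sum_le_card_smul_sum {ι : Type*} [DecidableEq ι] (s : Finset ι)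
    (a : ι → R) : star (∑ i ∈ s, a i) * ∑ i ∈ s, a i ≤ #s • ∑ i ∈ s, star (a i) * a i := by
  induction s using Finset.induction_on with
  | empty => simp
  | insert x s hx ih =>
    have defect_insert : #(insert x s) • ∑ i ∈ insert x s, star (a i) * a i
        - star (∑ i ∈ insert x s, a i) * ∑ i ∈ insert x s, a i
        = (#s • ∑ i ∈ s, star (a i) * a i - star (∑ i ∈ s, a i) * ∑ i ∈ s, a i)
          + ∑ i ∈ s, star (a i - a x) * (a i - a x) := by
      simp only [sum_insert hx, card_insert_of_notMem hx, star_add, star_sub, star_sum,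
        add_mul, mul_add, sub_mul, mul_sub, sum_sub_distrib, sum_add_distrib, sum_mul, mul_sum,
        sum_const, succ_nsmul, nsmul_add]
      abel
    rw [← sub_nonneg, defect_insert]
    exact add_nonneg (sub_nonneg.2 ih) (sum_nonneg fun i _ => star_mul_self_nonneg _)

theorem star_geom_sum_mul_geom_sum_le {b : R} (hb : star b * b ≤ 1) (k : ℕ) :
    star (∑ i ∈ range k, b ^ i) * ∑ i ∈ range k, b ^ i ≤ (k ^ 2) • (1 : R) :=
  calc star (∑ i ∈ range k, b ^ i) * ∑ i ∈ range k, b ^ i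
      ≤ k • ∑ i ∈ range k, star (b ^ i) * b ^ i := by
        simpa using star_sum_mul_sum_le_card_smul_sum (range k) (b ^ ·)
    _ ≤ k • ∑ i ∈ range k, (1 : R) :=
        nsmul_le_nsmul_right (sum_le_sum fun i _ => star_pow_mul_pow_le_one hb i) k
    _ = (k ^ 2) • (1 : R) := by rw [sum_const, card_range, smul_smul, sq]

theorem star_one_sub_pow_mul_one_sub_pow_le {b : R} (hb : star b * b ≤ 1) (k : ℕ) :
    star (1 - b ^ k) * (1 - b ^ k) ≤ (k ^ 2) • (star (1 - b) * (1 - b)) := by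
  rw [← geom_sum_mul_neg, star_mul, ← mul_assoc, mul_assoc (star (1 - b))]
  calc star (1 - b) * (star (∑ i ∈ range k, b ^ i) * ∑ i ∈ range k, b ^ i) * (1 - b)
      ≤ star (1 - b) * ((k ^ 2) • (1 : R)) * (1 - b) :=
        star_left_conjugate_le_conjugate (star_geom_sum_mul_geom_sum_le hb k) _
    _ = (k ^ 2) • (star (1 - b) * (1 - b)) := by rw [mul_smul_comm, mul_one, smul_mul_assoc]

end StarOrderedRing

theorem transient_part_bound_general
    (d : ℕ) (H : Matrix (Fin d) (Fin d) ℝ) (α : ℝ)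
    (h : ((1 : Matrix (Fin d) (Fin d) ℝ) - (1 - α • Hᵀ) * (1 - α • H)).PosSemidef) :
    ∀ k : ℕ,
      ((α ^ 2 * (k : ℝ) ^ 2) • (Hᵀ * H) -
        (1 - (1 - α • H) ^ k)ᵀ * (1 - (1 - α • H) ^ k)).PosSemidef := by
  intro k
  have star_eq_transpose (M : Matrix (Fin d) (Fin d) ℝ) : star M = Mᵀ :=
    conjTranspose_eq_transpose_of_trivial M
  have contraction : star (1 - α • H) * (1 - α • H) ≤ 1 := by
    rwa [le_iff, star_eq_transpose, transpose_sub, transpose_one, transpose_smul]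
  have bound := star_one_sub_pow_mul_one_sub_pow_le contraction k
  rw [sub_sub_cancel, star_eq_transpose, star_eq_transpose, transpose_smul, smul_mul_smul_comm,
    ← sq, ← Nat.cast_smul_eq_nsmul ℝ, smul_smul, Nat.cast_pow, mul_comm ((k : ℝ) ^ 2)] at bound
  exact le_iff.mp bound

/-- If `(I − αHᵀ)(I − αH) ⪯ I`, then for every `k`,
`(I − (I − αH)^k)ᵀ (I − (I − αH)^k) ⪯ α² k² Hᵀ H`. -/
theorem transient_part_bound
    (d : ℕ) (H : Matrix (Fin d) (Fin d) ℝ) (α : ℝ) (hα : 0 < α)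
    (h : ((1 : Matrix (Fin d) (Fin d) ℝ) - (1 - α • Hᵀ) * (1 - α • H)).PosSemidef) :
    ∀ k : ℕ,
      ((α ^ 2 * (k : ℝ) ^ 2) • (Hᵀ * H) -
        (1 - (1 - α • H) ^ k)ᵀ * (1 - (1 - α • H) ^ k)).PosSemidef :=
  transient_part_bound_general d H α h
end

section
/- For every c ≥ 0 there exists a constant C > 0 such that for every μ > 0 and every integer k ≥ 1, setting α_i = 2/(μ·(i+1)) for all i: Σ_{i=0}^{k−1} α_i·( c·α_i + μ⁻¹·(i+1)⁻¹ )·exp(−μ·Σ_{j=i+1}^{k−1} α_j) ≤ C/(μ²·k). -/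
/-!
Since `μ · α_j = 2/(j+1)` and `exp(-1/(j+1)) ≤ (j+1)/(j+2)`, the exponential factor telescopes
to at most `((i+2)/(k+1))²`. The `i`-th summand is `(4c+2)/(μ²(i+1)²)` times that factor, hence
at most `4(4c+2)/(μ²(k+1)²)`, and `k` such terms sum to at most `4(4c+2)/(μ²k)`.
-/

open Finset Real

theorem Real.exp_neg_sum_Ico_inv_le {m n : ℕ} (h : m ≤ n) :
    exp (-∑ j ∈ Ico m n, ((j : ℝ) + 1)⁻¹) ≤ ((m : ℝ) + 1) / ((n : ℝ) + 1) := by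
  induction n, h using Nat.le_induction with
  | base => simp [div_self (Nat.cast_add_one_ne_zero m : (m : ℝ) + 1 ≠ 0)]
  | succ n hmn ih =>
    have hstep : exp (-((n : ℝ) + 1)⁻¹) ≤ ((n : ℝ) + 1) / ((n : ℝ) + 2) := by
      rw [exp_neg, ← one_div, div_le_div_iff₀ (exp_pos _) (by positivity)]
      have := add_one_le_exp ((n : ℝ) + 1)⁻¹
      have : ((n : ℝ) + 1) * (((n : ℝ) + 1)⁻¹ + 1) = (n : ℝ) + 2 := by field_simp; ring
      nlinarith
    rw [sum_Ico_succ_top hmn, neg_add, exp_add]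
    calc _ ≤ ((m : ℝ) + 1) / ((n : ℝ) + 1) * (((n : ℝ) + 1) / ((n : ℝ) + 2)) :=
          mul_le_mul ih hstep (exp_pos _).le (by positivity)
      _ = _ := by push_cast; field_simp; ring

theorem exp_neg_mul_sum_Ico_two_div_le {μ : ℝ} (hμ : 0 < μ) {m n : ℕ} (h : m ≤ n) :
    exp (-μ * ∑ j ∈ Ico m n, 2 / (μ * ((j : ℝ) + 1))) ≤
      (((m : ℝ) + 1) / ((n : ℝ) + 1)) ^ 2 := by
  have hsum : -μ * ∑ j ∈ Ico m n, 2 / (μ * ((j : ℝ) + 1)) =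
      2 * -∑ j ∈ Ico m n, ((j : ℝ) + 1)⁻¹ := by
    rw [mul_sum, mul_neg, mul_sum, ← sum_neg_distrib]
    refine sum_congr rfl fun j _ => ?_
    field_simp
  rw [hsum]
  calc exp (2 * -∑ j ∈ Ico m n, ((j : ℝ) + 1)⁻¹)
      = exp (-∑ j ∈ Ico m n, ((j : ℝ) + 1)⁻¹) ^ 2 := by rw [← exp_nat_mul]; norm_num
    _ ≤ _ := by gcongr; exact exp_neg_sum_Ico_inv_le h

theorem td_error_summand_le {c μ : ℝ} (hc : 0 ≤ c) (hμ : 0 < μ) {i k : ℕ}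
    (hik : i < k) :
    2 / (μ * ((i : ℝ) + 1)) * (c * (2 / (μ * ((i : ℝ) + 1))) + μ⁻¹ * ((i : ℝ) + 1)⁻¹) *
        exp (-μ * ∑ j ∈ Ico (i + 1) k, 2 / (μ * ((j : ℝ) + 1))) ≤
      4 * (4 * c + 2) / (μ ^ 2 * ((k : ℝ) + 1) ^ 2) := by
  have hcoef :
      2 / (μ * ((i : ℝ) + 1)) * (c * (2 / (μ * ((i : ℝ) + 1))) + μ⁻¹ * ((i : ℝ) + 1)⁻¹) =
        (4 * c + 2) / (μ ^ 2 * ((i : ℝ) + 1) ^ 2) := by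
    field_simp; ring
  have hgrowth : ((i : ℝ) + 2) ^ 2 ≤ 4 * ((i : ℝ) + 1) ^ 2 := by
    nlinarith [(Nat.cast_nonneg i : (0 : ℝ) ≤ i)]
  have hdecay := exp_neg_mul_sum_Ico_two_div_le hμ hik
  push_cast at hdecay
  calc _ ≤ (4 * c + 2) / (μ ^ 2 * ((i : ℝ) + 1) ^ 2) *
          (((i : ℝ) + 1 + 1) / ((k : ℝ) + 1)) ^ 2 := by
        rw [hcoef]; gcongr
    _ ≤ _ := by
        rw [div_pow, div_mul_div_comm, div_le_div_iff₀ (by positivity) (by positivity)]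
        have : (0 : ℝ) ≤ (4 * c + 2) * (μ ^ 2 * ((k : ℝ) + 1) ^ 2) := by positivity
        nlinarith

/-- Arithmetic estimate yielding the `O(1/(μ²k))` rate of regularised stochastic TD(0):
with learning rates `α_i = 2/(μ(i+1))`, second-moment constants at most `c` and squared
biases at most `1/(i+1)`, the stochastic-approximation error sum is `≤ C/(μ²k)`. -/
theorem rate_stochastic_td
    (c : ℝ) (hc : 0 ≤ c) :
    ∃ C > 0, ∀ μ : ℝ, 0 < μ → ∀ k : ℕ, 1 ≤ k →
      ∑ i ∈ Finset.range k,
          (2 / (μ * ((i : ℝ) + 1))) *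
            (c * (2 / (μ * ((i : ℝ) + 1))) + μ⁻¹ * ((i : ℝ) + 1)⁻¹) *
            Real.exp (-μ * ∑ j ∈ Finset.Ico (i + 1) k, 2 / (μ * ((j : ℝ) + 1))) ≤
        C / (μ ^ 2 * k) := by
  refine ⟨4 * (4 * c + 2), by positivity, fun μ hμ k hk => ?_⟩
  have hkpos : (0 : ℝ) < k := by exact_mod_cast hk
  calc _ ≤ ∑ _i ∈ range k, 4 * (4 * c + 2) / (μ ^ 2 * ((k : ℝ) + 1) ^ 2) :=
        sum_le_sum fun i hi => td_error_summand_le hc hμ (mem_range.mp hi)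
    _ = k * (4 * (4 * c + 2)) / (μ ^ 2 * ((k : ℝ) + 1) ^ 2) := by
        rw [sum_const, card_range, nsmul_eq_mul]; ring
    _ ≤ 4 * (4 * c + 2) / (μ ^ 2 * k) := by
        rw [div_le_div_iff₀ (by positivity) (by positivity)]
        have : (0 : ℝ) ≤ 4 * (4 * c + 2) * μ ^ 2 * k := by positivity
        nlinarith
end
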